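/- arXiv:math/0409140 — 2 statements merged into one kernel-verified Lean document; each statement's English description precedes it below -/
import Mathlib

section
/- Let V be a vertex algebra and W any V-module. For a ∈ V and m, n ∈ ℤ one has a_m E_n(W) ⊆ E_{n-m-1}(W); furthermore, a_m E_n(W) ⊆ E_{n-m}(W) for m ≥ 0. -/
open scoped DirectSum

noncomputable section


/-- Integer binomial coefficient `C(m, i)` for `m : ℤ`, `i : ℕ`. -/
def intBinom (m : ℤ) (i : ℕ) : ℤ :=
  (∏ j ∈ Finset.range i, (m - (j : ℤ))) / (i.factorial : ℤ)

/-- A vertex algebra over `ℂ`: a complex vector space `V` with a vacuum vector and a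
linear state-field correspondence `Y`, `Y(v,x) = ∑ₙ vₙ x^{-n-1}`, satisfying
truncation, vacuum and creation properties, and Borcherds' commutator and
iterate formulas. -/
structure VertexAlgebra (V : Type*) [AddCommGroup V] [Module ℂ V] where
  /-- the coefficients of vertex operators: `Y u n v = uₙ v`. -/
  Y : V →ₗ[ℂ] ℤ → Module.End ℂ V
  /-- the vacuum vector `𝟏`. -/
  vac : V
  trunc : ∀ u v : V, ∃ N : ℕ, ∀ n : ℤ, (N : ℤ) ≤ n → Y u n v = 0
  vac_act : ∀ (n : ℤ) (v : V), Y vac n v = if n = -1 then v else 0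
  create : ∀ u : V, Y u (-1) vac = u
  create_nonneg : ∀ (u : V) (n : ℤ), 0 ≤ n → Y u n vac = 0
  commutator : ∀ (u v w : V) (m n : ℤ),
    Y u m (Y v n w) - Y v n (Y u m w)
      = ∑ᶠ i : ℕ, intBinom m i • Y (Y u i v) (m + n - i) w
  iterate : ∀ (u v w : V) (m n : ℤ),
    Y (Y u m v) n w
      = ∑ᶠ i : ℕ, ((-1 : ℤ) ^ i * intBinom m i) •
          (Y u (m - i) (Y v (n + i) w)
            - ((((-1 : ℤˣ) ^ m : ℤˣ) : ℤ) • Y v (m + n - i) (Y u i w)))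

/-- A module for a vertex algebra. -/
structure VAModule {V : Type*} [AddCommGroup V] [Module ℂ V] (va : VertexAlgebra V)
    (W : Type*) [AddCommGroup W] [Module ℂ W] where
  /-- the action `act v n w = vₙ w`. -/
  act : V →ₗ[ℂ] ℤ → Module.End ℂ W
  trunc : ∀ (v : V) (w : W), ∃ N : ℕ, ∀ n : ℤ, (N : ℤ) ≤ n → act v n w = 0
  vac_act : ∀ (n : ℤ) (w : W), act va.vac n w = if n = -1 then w else 0
  commutator : ∀ (u v : V) (w : W) (m n : ℤ),
    act u m (act v n w) - act v n (act u m w)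
      = ∑ᶠ i : ℕ, intBinom m i • act (va.Y u i v) (m + n - i) w
  iterate : ∀ (u v : V) (w : W) (m n : ℤ),
    act (va.Y u m v) n w
      = ∑ᶠ i : ℕ, ((-1 : ℤ) ^ i * intBinom m i) •
          (act u (m - i) (act v (n + i) w)
            - ((((-1 : ℤˣ) ^ m : ℤˣ) : ℤ) • act v (m + n - i) (act u i w)))

variable {V : Type*} [AddCommGroup V] [Module ℂ V]

/-- The adjoint module of a vertex algebra. -/
def VertexAlgebra.adjoint (va : VertexAlgebra V) : VAModule va V where
  act := va.Y
  trunc := va.trunc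
  vac_act := va.vac_act
  commutator := va.commutator
  iterate := va.iterate

variable {W : Type*} [AddCommGroup W] [Module ℂ W]

/-- `Efilt M n = E_n(W)`: the subspace of `W` spanned by the vectors
`u⁽¹⁾_{-1-k₁} ⋯ u⁽ʳ⁾_{-1-k_r} w` for `r ≥ 1`, `u⁽ⁱ⁾ ∈ V`, `w ∈ W`, `kᵢ ≥ 0`,
`k₁ + ⋯ + k_r ≥ n`. -/
def Efilt {va : VertexAlgebra V} (M : VAModule va W) (n : ℤ) : Submodule ℂ W :=
  Submodule.span ℂ {x : W | ∃ (L : List (V × ℕ)) (w : W), L ≠ [] ∧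
    n ≤ (L.map fun p => ((p.2 : ℤ))).sum ∧
    x = L.foldr (fun p acc => M.act p.1 (-1 - (p.2 : ℤ)) acc) w}

/-- `Cfilt M n = C_n(W)`: the subspace of `W` spanned by the vectors `v_{-n} w`. -/
def Cfilt {va : VertexAlgebra V} (M : VAModule va W) (n : ℕ) : Submodule ℂ W :=
  Submodule.span ℂ {x : W | ∃ (v : V) (w : W), x = M.act v (-(n : ℤ)) w}

/-! `E_s(W)` is spanned by words `b_{-1-k} y'` of weight at least `s`. An operator `b_j` with `j < 0` just
prepends a letter to a word, raising the weight by `-j - 1`. For `j = m ≥ 0`, induct on the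
length of the word: the commutator formula moves `a_m` past the first letter at the cost of
terms `(a_i b)_{m-1-k-i} y'`, and each of these has the required weight, either by induction
(nonnegative mode) or by prepending (negative mode). -/

section Words

variable {va : VertexAlgebra V} (M : VAModule va W)

def negWord (L : List (V × ℕ)) (w : W) : W :=
  L.foldr (fun p acc => M.act p.1 (-1 - (p.2 : ℤ)) acc) w

@[simp]
lemma negWord_cons (b : V) (k : ℕ) (L : List (V × ℕ)) (w : W) :
    negWord M ((b, k) :: L) w = M.act b (-1 - (k : ℤ)) (negWord M L w) :=
  rfl

def negWeight {α : Type*} (L : List (α × ℕ)) : ℤ :=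
  (L.map fun p => (p.2 : ℤ)).sum

@[simp]
lemma negWeight_cons {α : Type*} (b : α) (k : ℕ) (L : List (α × ℕ)) :
    negWeight ((b, k) :: L) = k + negWeight L := by
  simp [negWeight]

end Words

section Efilt

variable {va : VertexAlgebra V} (M : VAModule va W)

lemma Efilt_le_iff {n : ℤ} {p : Submodule ℂ W} :
    Efilt M n ≤ p ↔ ∀ L w, L ≠ [] → n ≤ negWeight L → negWord M L w ∈ p := by
  simp only [Efilt, Submodule.span_le, Set.ofPred_subset]
  constructor
  · intro h L w hL hn
    exact h _ ⟨L, w, hL, hn, rfl⟩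
  · rintro h _ ⟨L, w, hL, hn, rfl⟩
    exact h L w hL hn

lemma Efilt_anti : Antitone (Efilt M) := fun _ _ hmn =>
  Submodule.span_mono fun _ ⟨L, w, hL, hn, hx⟩ => ⟨L, w, hL, hmn.trans hn, hx⟩

lemma Efilt_eq_top_of_nonpos {n : ℤ} (hn : n ≤ 0) : Efilt M n = ⊤ :=
  eq_top_iff.mpr fun w _ =>
    Submodule.subset_span ⟨[(va.vac, 0)], w, List.cons_ne_nil _ _, by simpa using hn,
      by simp [M.vac_act]⟩

lemma negWord_mem_Efilt (L : List (V × ℕ)) (w : W) : negWord M L w ∈ Efilt M (negWeight L) := by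
  cases L with
  | nil => simp [Efilt_eq_top_of_nonpos, negWeight]
  | cons p L => exact Submodule.subset_span ⟨p :: L, w, List.cons_ne_nil _ _, le_rfl, rfl⟩

lemma act_mem_Efilt_of_neg (b : V) {j n : ℤ} (hj : j < 0) {w : W} (hw : w ∈ Efilt M n) :
    M.act b j w ∈ Efilt M (n - j - 1) := by
  obtain ⟨k, rfl⟩ : ∃ k : ℕ, j = -1 - k := ⟨(-1 - j).toNat, by omega⟩
  suffices Efilt M n ≤ (Efilt M (n - (-1 - k) - 1)).comap (M.act b (-1 - k)) from this hw
  rw [Efilt_le_iff]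
  intro L w hL hn
  refine Submodule.subset_span ⟨(b, k) :: L, w, List.cons_ne_nil _ _, ?_, rfl⟩
  change _ ≤ negWeight ((b, k) :: L)
  rw [negWeight_cons]
  omega

lemma act_mem_Efilt_sub_one (a : V) (j : ℤ) {n : ℤ} {w : W} (hw : w ∈ Efilt M n)
    (hnonneg : 0 ≤ j → M.act a j w ∈ Efilt M (n - j)) :
    M.act a j w ∈ Efilt M (n - j - 1) := by
  rcases lt_or_ge j 0 with hj | hj
  · exact act_mem_Efilt_of_neg M a hj hw
  · exact Efilt_anti M (by omega) (hnonneg hj)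

lemma act_negWord_mem_Efilt (L : List (V × ℕ)) (w : W) (a : V) {m : ℤ} (hm : 0 ≤ m) :
    M.act a m (negWord M L w) ∈ Efilt M (negWeight L - m) := by
  induction L generalizing a m with
  | nil => simp [Efilt_eq_top_of_nonpos, negWeight, hm]
  | cons p L ih =>
    obtain ⟨b, k⟩ := p
    have hcomm := M.commutator a b (negWord M L w) m (-1 - k)
    rw [negWord_cons, negWeight_cons, sub_eq_iff_eq_add'.mp hcomm]
    refine add_mem ?_ (finsum_induction _ (zero_mem _) (fun _ _ => add_mem) fun i => ?_)
    · exact Efilt_anti M (by omega) (act_mem_Efilt_of_neg M b (by omega) (ih a hm))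
    · refine Submodule.smul_of_tower_mem _ _ (Efilt_anti M ?_
        (act_mem_Efilt_sub_one M _ _ (negWord_mem_Efilt M L w) (ih _)))
      omega

lemma act_mem_Efilt_of_nonneg (a : V) {m n : ℤ} (hm : 0 ≤ m) {w : W} (hw : w ∈ Efilt M n) :
    M.act a m w ∈ Efilt M (n - m) := by
  suffices Efilt M n ≤ (Efilt M (n - m)).comap (M.act a m) from this hw
  rw [Efilt_le_iff]
  intro L w _ hn
  exact Efilt_anti M (by omega) (act_negWord_mem_Efilt M L w a hm)

end Efilt

/-- **Lemma 2.11 (lbaasicproperty).** For a vertex algebra `V`, a `V`-module `W`,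
`a ∈ V` and `m, n ∈ ℤ`, one has `a_m E_n(W) ⊆ E_{n-m-1}(W)`, and furthermore
`a_m E_n(W) ⊆ E_{n-m}(W)` for `m ≥ 0`. -/
theorem stmt2 {V : Type*} [AddCommGroup V] [Module ℂ V] {W : Type*} [AddCommGroup W]
    [Module ℂ W] (va : VertexAlgebra V) (M : VAModule va W) (a : V) (m n : ℤ) :
    (∀ w ∈ Efilt M n, M.act a m w ∈ Efilt M (n - m - 1)) ∧
    (0 ≤ m → ∀ w ∈ Efilt M n, M.act a m w ∈ Efilt M (n - m)) :=
  ⟨fun _ hw => act_mem_Efilt_sub_one M a m hw fun hm => act_mem_Efilt_of_nonneg M a hm hw,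
    fun hm _ hw => act_mem_Efilt_of_nonneg M a hm hw⟩

end
end

section
/- Let V be any vertex algebra, W a V-module, and n a nonnegative integer. Then u^{(1)}_{-k_1}⋯u^{(r)}_{-k_r} w ∈ C_{n+2}(W) for all r ≥ 2^n, u^{(1)},…,u^{(r)} ∈ V, w ∈ W, and k_1,…,k_r ≥ 2. -/
open scoped DirectSum

noncomputable section


variable {V : Type*} [AddCommGroup V] [Module ℂ V]

variable {W : Type*} [AddCommGroup W] [Module ℂ W]

section Aux

lemma finsum_mem_submodule {W : Type*} [AddCommGroup W] [Module ℂ W]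
    (S : Submodule ℂ W) (f : ℕ → W) (h : ∀ i, f i ∈ S) : (∑ᶠ i, f i) ∈ S := by
  by_cases hs : (Function.support f).Finite
  · rw [finsum_eq_sum f hs]; exact Submodule.sum_mem _ fun i _ => h i
  · rw [finsum_of_infinite_support hs]; exact S.zero_mem

lemma intBinom_neg_one (i : ℕ) : intBinom (-1) i = (-1) ^ i := by
  unfold intBinom
  have h : ∏ j ∈ Finset.range i, ((-1 : ℤ) - (j : ℤ)) = (-1) ^ i * (i.factorial : ℤ) := by
    induction i with
    | zero => simp
    | succ k ih =>
      rw [Finset.prod_range_succ, ih, Nat.factorial_succ, pow_succ]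
      push_cast; ring
  rw [h, Int.mul_ediv_cancel]
  exact_mod_cast i.factorial_ne_zero

lemma intBinom_neg_two (i : ℕ) : intBinom (-2) i = (-1) ^ i * ((i : ℤ) + 1) := by
  unfold intBinom
  have h : ∏ j ∈ Finset.range i, ((-2 : ℤ) - (j : ℤ))
      = ((-1) ^ i * ((i : ℤ) + 1)) * (i.factorial : ℤ) := by
    induction i with
    | zero => simp
    | succ k ih =>
      rw [Finset.prod_range_succ, ih, Nat.factorial_succ, pow_succ]
      push_cast; ring
  rw [h, Int.mul_ediv_cancel]
  exact_mod_cast i.factorial_ne_zero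

end Aux
section Aux2

variable {V : Type*} [AddCommGroup V] [Module ℂ V] {W : Type*} [AddCommGroup W]
    [Module ℂ W] (va : VertexAlgebra V) (M : VAModule va W)

/-- The derivative property: `(u₋₂𝟏)ₙ w = -n · u_{n-1} w`. -/
lemma deriv_act (u : V) (n : ℤ) (w : W) :
    M.act (va.Y u (-2) va.vac) n w = (-n) • M.act u (n - 1) w := by
  have hunit : (((-1 : ℤˣ) ^ (-2 : ℤ) : ℤˣ) : ℤ) = 1 := by decide
  have hcoef : ∀ i : ℕ, ((-1 : ℤ) ^ i * intBinom (-2) i) = (i : ℤ) + 1 := by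
    intro i
    rw [intBinom_neg_two, ← mul_assoc, ← mul_pow]
    norm_num
  have hiter := M.iterate u va.vac w (-2) n
  set g : ℕ → W := fun i =>
    if ((i : ℤ) = -1 - n ∨ (i : ℤ) = n - 1) then (-n) • M.act u (n - 1) w else 0 with hg
  have hfun : ∀ i : ℕ, ((-1 : ℤ) ^ i * intBinom (-2) i) •
      (M.act u (-2 - i) (M.act va.vac (n + i) w)
        - ((((-1 : ℤˣ) ^ (-2 : ℤ) : ℤˣ) : ℤ) • M.act va.vac (-2 + n - i) (M.act u i w)))
      = g i := by
    intro i
    rw [hcoef, hunit, one_smul, M.vac_act, M.vac_act]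
    simp only [hg]
    by_cases h1 : n + (i : ℤ) = -1
    · have h2 : ¬ (-2 + n - (i : ℤ) = -1) := by omega
      rw [if_pos h1, if_neg h2, sub_zero]
      have hi : (-2 - (i : ℤ)) = n - 1 := by omega
      rw [hi, if_pos (Or.inl (by omega : (i : ℤ) = -1 - n))]
      have : (i : ℤ) + 1 = -n := by omega
      rw [this]
    · by_cases h2 : -2 + n - (i : ℤ) = -1
      · rw [if_neg h1, map_zero, if_pos h2, zero_sub,
          if_pos (Or.inr (by omega : (i : ℤ) = n - 1))]
        have hi : (i : ℤ) = n - 1 := by omega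
        rw [hi]
        have h3 : ((n : ℤ) - 1) + 1 = n := by ring
        rw [h3, smul_neg, ← neg_smul]
      · rw [if_neg h1, if_neg h2, map_zero, sub_zero, smul_zero,
          if_neg (by omega : ¬ ((i : ℤ) = -1 - n ∨ (i : ℤ) = n - 1))]
  have hiter2 : M.act (va.Y u (-2) va.vac) n w = ∑ᶠ i, g i := by
    rw [hiter]; exact finsum_congr hfun
  rw [hiter2]
  rcases lt_trichotomy n 0 with hn | hn | hn
  · rw [finsum_eq_single g (-1 - n).toNat]
    · simp only [hg]
      rw [if_pos (Or.inl (by omega : (((-1 - n).toNat : ℤ)) = -1 - n))]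
    · intro x hx
      simp only [hg]
      rw [if_neg (by omega : ¬ (((x : ℤ)) = -1 - n ∨ ((x : ℤ)) = n - 1))]
  · subst hn
    have hzero : ∀ i : ℕ, g i = 0 := by
      intro i; simp only [hg]
      rw [if_neg (by omega : ¬ (((i : ℤ)) = -1 - 0 ∨ ((i : ℤ)) = 0 - 1))]
    rw [finsum_congr hzero, finsum_zero, neg_zero, zero_smul]
  · rw [finsum_eq_single g (n - 1).toNat]
    · simp only [hg]
      rw [if_pos (Or.inr (by omega : (((n - 1).toNat : ℤ)) = n - 1))]
    · intro x hx
      simp only [hg]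
      rw [if_neg (by omega : ¬ (((x : ℤ)) = -1 - n ∨ ((x : ℤ)) = n - 1))]

end Aux2
section Aux3

variable {V : Type*} [AddCommGroup V] [Module ℂ V] {W : Type*} [AddCommGroup W]
    [Module ℂ W] (va : VertexAlgebra V) (M : VAModule va W)

/-- `u_j x ∈ C_m(W)` whenever `j ≤ -m` (and `m ≥ 2`). -/
lemma deep_mem' (m : ℕ) (hm : 2 ≤ m) (u : V) (j : ℤ) (hj : j ≤ -(m : ℤ)) (x : W) :
    M.act u j x ∈ Cfilt M m := by
  have key : ∀ (d : ℕ) (u : V) (j : ℤ), j = -(m : ℤ) - d → ∀ x : W,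
      M.act u j x ∈ Cfilt M m := by
    intro d
    induction d with
    | zero =>
      intro u' j' hj' x'
      have hj'' : j' = -(m : ℤ) := by omega
      subst hj''
      exact Submodule.subset_span ⟨u', x', rfl⟩
    | succ d ih =>
      intro u j hj x
      have h1 : M.act (va.Y u (-2) va.vac) (j + 1) x ∈ Cfilt M m :=
        ih (va.Y u (-2) va.vac) (j + 1) (by omega) x
      have key2 : M.act (va.Y u (-2) va.vac) (j + 1) x = (-(j + 1)) • M.act u j x := by
        have h11 : j + 1 - 1 = j := by ring
        rw [deriv_act, h11]
      have hc : ((-(j + 1) : ℤ) : ℂ) ≠ 0 := by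
        have : -(j + 1) = (m : ℤ) + d := by omega
        rw [this]
        exact Int.cast_ne_zero.mpr (by omega)
      have : M.act u j x = (((-(j + 1) : ℤ) : ℂ))⁻¹ • M.act (va.Y u (-2) va.vac) (j + 1) x := by
        rw [key2, ← Int.cast_smul_eq_zsmul ℂ, inv_smul_smul₀ hc]
      rw [this]
      exact Submodule.smul_mem _ _ h1
  exact key (-(j) - m).toNat u j (by omega) x

/-- `C_m(W)` is stable under all modes `u_j` with `j ≤ -1`. -/
lemma act_stable (m : ℕ) (hm : 2 ≤ m) (u : V) (j : ℤ) (hj : j ≤ -1) {x : W}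
    (hx : x ∈ Cfilt M m) : M.act u j x ∈ Cfilt M m := by
  induction hx using Submodule.span_induction with
  | mem y hy =>
    obtain ⟨v, w, rfl⟩ := hy
    have hcomm := M.commutator u v w j (-(m : ℤ))
    have heq : M.act u j (M.act v (-(m : ℤ)) w)
        = M.act v (-(m : ℤ)) (M.act u j w)
          + ∑ᶠ i : ℕ, intBinom j i • M.act (va.Y u i v) (j + -(m : ℤ) - i) w := by
      rw [← hcomm]; abel
    rw [heq]
    refine Submodule.add_mem _ (Submodule.subset_span ⟨v, _, rfl⟩) ?_
    refine finsum_mem_submodule _ _ fun i => ?_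
    exact zsmul_mem (deep_mem' va M m hm _ _ (by omega) w) _
  | zero => rw [map_zero]; exact Submodule.zero_mem _
  | add a b _ _ pa pb => rw [map_add]; exact Submodule.add_mem _ pa pb
  | smul c a _ pa => rw [map_smul]; exact Submodule.smul_mem _ c pa

end Aux3
section Aux4

variable {V : Type*} [AddCommGroup V] [Module ℂ V] {W : Type*} [AddCommGroup W]
    [Module ℂ W] (va : VertexAlgebra V) (M : VAModule va W)

/-- Key lemma: `v_{-N} b_{-N} y ∈ C_{N+1}(W)` for `N ≥ 2`. -/
lemma dd_mem (N : ℕ) (hN : 2 ≤ N) (v b : V) (y : W) :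
    M.act v (-(N : ℤ)) (M.act b (-(N : ℤ)) y) ∈ Cfilt M (N + 1) := by
  have hunit : (((-1 : ℤˣ) ^ (-1 : ℤ) : ℤˣ) : ℤ) = -1 := by decide
  have hcoef : ∀ i : ℕ, ((-1 : ℤ) ^ i * intBinom (-1) i) = 1 := by
    intro i
    rw [intBinom_neg_one, ← mul_pow]
    norm_num
  set n' : ℤ := 1 - 2 * (N : ℤ) with hn'
  set g : ℕ → W := fun i =>
    M.act v (-1 - (i : ℤ)) (M.act b (n' + i) y) + M.act b (-1 + n' - i) (M.act v i y)
    with hg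
  have hiter2 : M.act (va.Y v (-1) b) n' y = ∑ᶠ i, g i := by
    rw [M.iterate v b y (-1) n']
    refine finsum_congr fun i => ?_
    rw [hcoef, hunit, one_smul]
    simp only [hg]
    rw [neg_smul, one_smul, sub_neg_eq_add]
  obtain ⟨K1, hK1⟩ := M.trunc b y
  obtain ⟨K2, hK2⟩ := M.trunc v y
  set K : ℕ := K1 + K2 + 3 * N + 5 with hK
  have hsupp : Function.support g ⊆ (Finset.range K : Set ℕ) := by
    intro i hi
    simp only [Finset.coe_range, Set.mem_Iio]
    by_contra hcon
    push_neg at hcon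
    apply hi
    simp only [hg]
    rw [hK1 (n' + i) (by omega), hK2 (i : ℤ) (by omega), map_zero, map_zero, add_zero]
  have hsum : M.act (va.Y v (-1) b) n' y = ∑ i ∈ Finset.range K, g i := by
    rw [hiter2]
    exact finsum_eq_finset_sum_of_support_subset g hsupp
  have hmem : N - 1 ∈ Finset.range K := by
    simp only [Finset.mem_range]; omega
  have hsplit : g (N - 1) = M.act (va.Y v (-1) b) n' y
      - ∑ x ∈ (Finset.range K).erase (N - 1), g x := by
    rw [hsum, ← Finset.add_sum_erase _ g hmem]
    abel
  have hcast : ((N - 1 : ℕ) : ℤ) = (N : ℤ) - 1 := by omega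
  have hg1 : g (N - 1) = M.act v (-(N : ℤ)) (M.act b (-(N : ℤ)) y)
      + M.act b (-1 + n' - ((N - 1 : ℕ) : ℤ)) (M.act v ((N - 1 : ℕ) : ℤ) y) := by
    simp only [hg]
    have e1 : -1 - ((N - 1 : ℕ) : ℤ) = -(N : ℤ) := by omega
    have e2 : n' + ((N - 1 : ℕ) : ℤ) = -(N : ℤ) := by omega
    rw [e1, e2]
  have hrest : ∀ i ∈ (Finset.range K).erase (N - 1), g i ∈ Cfilt M (N + 1) := by
    intro i hi
    have hne : i ≠ N - 1 := (Finset.mem_erase.1 hi).1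
    refine Submodule.add_mem _ ?_ (deep_mem' va M (N + 1) (by omega) b _ (by omega) _)
    rcases lt_or_ge i (N - 1) with h | h
    · exact act_stable va M (N + 1) (by omega) v _ (by omega)
        (deep_mem' va M (N + 1) (by omega) b _ (by omega) _)
    · have hiN : N ≤ i := by omega
      exact deep_mem' va M (N + 1) (by omega) v _ (by omega) _
  have htarget : M.act v (-(N : ℤ)) (M.act b (-(N : ℤ)) y)
      = g (N - 1) - M.act b (-1 + n' - ((N - 1 : ℕ) : ℤ)) (M.act v ((N - 1 : ℕ) : ℤ) y) := by
    rw [hg1]; abel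
  rw [htarget, hsplit]
  refine Submodule.sub_mem _ (Submodule.sub_mem _ ?_ ?_) ?_
  · exact deep_mem' va M (N + 1) (by omega) _ n' (by omega) y
  · exact Submodule.sum_mem _ hrest
  · exact deep_mem' va M (N + 1) (by omega) b _ (by omega) _

/-- `v_{-N}` maps `C_N(W)` into `C_{N+1}(W)` for `N ≥ 2`. -/
lemma dd_span (N : ℕ) (hN : 2 ≤ N) (v : V) {x : W} (hx : x ∈ Cfilt M N) :
    M.act v (-(N : ℤ)) x ∈ Cfilt M (N + 1) := by
  induction hx using Submodule.span_induction with
  | mem y hy =>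
    obtain ⟨b, w, rfl⟩ := hy
    exact dd_mem va M N hN v b w
  | zero => rw [map_zero]; exact Submodule.zero_mem _
  | add a b _ _ pa pb => rw [map_add]; exact Submodule.add_mem _ pa pb
  | smul c a _ pa => rw [map_smul]; exact Submodule.smul_mem _ c pa

end Aux4
section Aux5

variable {V : Type*} [AddCommGroup V] [Module ℂ V] {W : Type*} [AddCommGroup W]
    [Module ℂ W] (va : VertexAlgebra V) (M : VAModule va W)

lemma fold_zero (A : List (V × ℕ)) :
    A.foldr (fun p acc => M.act p.1 (-(p.2 : ℤ)) acc) (0 : W) = 0 := by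
  induction A with
  | nil => rfl
  | cons p A ih => simp only [List.foldr_cons, ih, map_zero]

lemma fold_add (A : List (V × ℕ)) (x y : W) :
    A.foldr (fun p acc => M.act p.1 (-(p.2 : ℤ)) acc) (x + y)
      = A.foldr (fun p acc => M.act p.1 (-(p.2 : ℤ)) acc) x
        + A.foldr (fun p acc => M.act p.1 (-(p.2 : ℤ)) acc) y := by
  induction A with
  | nil => rfl
  | cons p A ih => simp only [List.foldr_cons, ih, map_add]

lemma fold_smul (A : List (V × ℕ)) (c : ℂ) (x : W) :
    A.foldr (fun p acc => M.act p.1 (-(p.2 : ℤ)) acc) (c • x)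
      = c • A.foldr (fun p acc => M.act p.1 (-(p.2 : ℤ)) acc) x := by
  induction A with
  | nil => rfl
  | cons p A ih => simp only [List.foldr_cons, ih, map_smul]

/-- Commuting a deep mode through a product of modes `≤ -1`, modulo `C_{Nd+1}`. -/
lemma move_front (Nd : ℕ) (hNd : 1 ≤ Nd) (v : V) (A : List (V × ℕ))
    (hA : ∀ p ∈ A, 1 ≤ p.2) (w' : W) :
    A.foldr (fun p acc => M.act p.1 (-(p.2 : ℤ)) acc) (M.act v (-(Nd : ℤ)) w')
      - M.act v (-(Nd : ℤ)) (A.foldr (fun p acc => M.act p.1 (-(p.2 : ℤ)) acc) w')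
      ∈ Cfilt M (Nd + 1) := by
  induction A with
  | nil => simp only [List.foldr_nil, sub_self]; exact Submodule.zero_mem _
  | cons p A ih =>
    simp only [List.foldr_cons]
    set z := A.foldr (fun p acc => M.act p.1 (-(p.2 : ℤ)) acc) w' with hz
    have hc := ih (fun q hq => hA q (List.mem_cons_of_mem _ hq))
    have hk : 1 ≤ p.2 := hA p List.mem_cons_self
    have hco := M.commutator p.1 v z (-(p.2 : ℤ)) (-(Nd : ℤ))
    have key : M.act p.1 (-(p.2 : ℤ))
          (A.foldr (fun p acc => M.act p.1 (-(p.2 : ℤ)) acc) (M.act v (-(Nd : ℤ)) w'))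
        - M.act v (-(Nd : ℤ)) (M.act p.1 (-(p.2 : ℤ)) z)
        = M.act p.1 (-(p.2 : ℤ))
            (A.foldr (fun p acc => M.act p.1 (-(p.2 : ℤ)) acc) (M.act v (-(Nd : ℤ)) w')
              - M.act v (-(Nd : ℤ)) z)
          + (M.act p.1 (-(p.2 : ℤ)) (M.act v (-(Nd : ℤ)) z)
              - M.act v (-(Nd : ℤ)) (M.act p.1 (-(p.2 : ℤ)) z)) := by
      rw [map_sub]; abel
    rw [key]
    refine Submodule.add_mem _ ?_ ?_
    · exact act_stable va M (Nd + 1) (by omega) p.1 _ (by omega) hc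
    · rw [hco]
      refine finsum_mem_submodule _ _ fun i => ?_
      exact zsmul_mem (deep_mem' va M (Nd + 1) (by omega) _ _ (by omega) z) _

/-- Main induction. -/
lemma main_aux (n : ℕ) : ∀ (L : List (V × ℕ)), 2 ^ n ≤ L.length →
    (∀ p ∈ L, 2 ≤ p.2) → ∀ w : W,
    L.foldr (fun p acc => M.act p.1 (-(p.2 : ℤ)) acc) w ∈ Cfilt M (n + 2) := by
  induction n with
  | zero =>
    intro L hlen hk w
    match L, hlen with
    | p :: L', _ =>
      simp only [List.foldr_cons]
      exact deep_mem' va M 2 le_rfl p.1 _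
        (by have := hk p List.mem_cons_self; omega) _
  | succ n ih =>
    intro L hlen hk w
    have hpow : (2 : ℕ) ^ (n + 1) = 2 ^ n + 2 ^ n := by rw [pow_succ]; ring
    set t := L.length - 2 ^ n with ht
    have hsplit : L = L.take t ++ L.drop t := (List.take_append_drop _ _).symm
    rw [hsplit, List.foldr_append]
    have hdlen : 2 ^ n ≤ (L.drop t).length := by
      rw [List.length_drop]; omega
    have htlen : 2 ^ n ≤ (L.take t).length := by
      rw [List.length_take]; omega
    have hktake : ∀ p ∈ L.take t, 2 ≤ p.2 := fun p hp => hk p (List.mem_of_mem_take hp)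
    have hz_mem : (L.drop t).foldr (fun p acc => M.act p.1 (-(p.2 : ℤ)) acc) w
        ∈ Cfilt M (n + 2) :=
      ih (L.drop t) hdlen (fun p hp => hk p (List.mem_of_mem_drop hp)) w
    obtain ⟨z, hzdef⟩ : ∃ z, (L.drop t).foldr (fun p acc => M.act p.1 (-(p.2 : ℤ)) acc) w = z :=
      ⟨_, rfl⟩
    rw [hzdef] at hz_mem ⊢
    clear hzdef
    have hgoal : ∀ z : W, z ∈ Cfilt M (n + 2) →
        (L.take t).foldr (fun p acc => M.act p.1 (-(p.2 : ℤ)) acc) z ∈ Cfilt M (n + 1 + 2) := by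
      intro z hzm
      induction hzm using Submodule.span_induction with
      | mem y hy =>
        obtain ⟨v, w'', rfl⟩ := hy
        have hm := move_front va M (n + 2) (by omega) v (L.take t)
          (fun p hp => by have := hktake p hp; omega) w''
        have hf : (L.take t).foldr (fun p acc => M.act p.1 (-(p.2 : ℤ)) acc) w''
            ∈ Cfilt M (n + 2) := ih (L.take t) htlen hktake w''
        have hin : M.act v (-((n + 2 : ℕ) : ℤ))
            ((L.take t).foldr (fun p acc => M.act p.1 (-(p.2 : ℤ)) acc) w'')
            ∈ Cfilt M (n + 2 + 1) := dd_span va M (n + 2) (by omega) v hf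
        have heq : (L.take t).foldr (fun p acc => M.act p.1 (-(p.2 : ℤ)) acc)
              (M.act v (-((n + 2 : ℕ) : ℤ)) w'')
            = ((L.take t).foldr (fun p acc => M.act p.1 (-(p.2 : ℤ)) acc)
                (M.act v (-((n + 2 : ℕ) : ℤ)) w'')
              - M.act v (-((n + 2 : ℕ) : ℤ))
                ((L.take t).foldr (fun p acc => M.act p.1 (-(p.2 : ℤ)) acc) w''))
              + M.act v (-((n + 2 : ℕ) : ℤ))
                ((L.take t).foldr (fun p acc => M.act p.1 (-(p.2 : ℤ)) acc) w'') := by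
          abel
        rw [heq]
        have hidx : n + 1 + 2 = n + 2 + 1 := by omega
        rw [hidx]
        exact Submodule.add_mem _ hm hin
      | zero => rw [fold_zero]; exact Submodule.zero_mem _
      | add a b _ _ pa pb => rw [fold_add]; exact Submodule.add_mem _ pa pb
      | smul c a _ pa => rw [fold_smul]; exact Submodule.smul_mem _ c pa
    exact hgoal z hz_mem

end Aux5

/-- **Proposition 3.4 (pcn).** Let `V` be any vertex algebra, `W` a `V`-module and
`n` a nonnegative integer. Then `u⁽¹⁾_{-k₁} ⋯ u⁽ʳ⁾_{-k_r} w ∈ C_{n+2}(W)` for all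
`r ≥ 2ⁿ`, `u⁽ⁱ⁾ ∈ V`, `w ∈ W` and `kᵢ ≥ 2`. -/
theorem stmt8 {V : Type*} [AddCommGroup V] [Module ℂ V] {W : Type*} [AddCommGroup W]
    [Module ℂ W] (va : VertexAlgebra V) (M : VAModule va W) (n : ℕ)
    (L : List (V × ℕ)) (hlen : 2 ^ n ≤ L.length) (hk : ∀ p ∈ L, 2 ≤ p.2) (w : W) :
    L.foldr (fun p acc => M.act p.1 (-(p.2 : ℤ)) acc) w ∈ Cfilt M (n + 2) := by
  exact main_aux va M n L hlen hk w

end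
end
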